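/- For every Sturmian word ω over {0,1} and every integer k ≥ 1, there exist two positive integers ℓ₁ and ℓ₂ such that for every position i ≥ 0, the suffix of ω starting at position i begins in an abelian k-power with abelian period ℓ₁ or with abelian period ℓ₂. -/

import Mathlib

/-!
A balanced binary word has a frequency `α` of the letter `1`: every factor of length `n` contains
`n α ± 1` ones, and aperiodicity forces `α` to be irrational. By Dirichlet's theorem there are
lengths `ℓ₁`, `ℓ₂` with `ℓ₁ α` slightly above an integer `F₁` and `ℓ₂ α` slightly below an integer
`F₂`, so blocks of length `ℓ₁` contain `F₁` or `F₁ + 1` ones and blocks of length `ℓ₂` contain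
`F₂ - 1` or `F₂`. If at some position a heavy block occurred among the first `k` blocks of length
`ℓ₁` and a light one among the first `k` blocks of length `ℓ₂`, the two prefixes ending with them
would differ by a factor whose number of ones is off by almost `2` from the frequency prediction.
-/

/-- The factor of the infinite word `ω` of length `n` starting at position `i`. -/
def factor {A : Type*} (ω : ℕ → A) (i n : ℕ) : List A :=
  (List.range n).map fun j => ω (i + j)

/-- `ω` is `C`-balanced. -/
def IsCBalanced {A : Type*} [DecidableEq A] (ω : ℕ → A) (C : ℕ) : Prop :=
  ∀ a : A, ∀ n i j : ℕ,
    |((factor ω i n).count a : ℤ) - ((factor ω j n).count a : ℤ)| ≤ (C : ℤ)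

/-- `ω` is ultimately periodic. -/
def UltimatelyPeriodic {A : Type*} (ω : ℕ → A) : Prop :=
  ∃ m p : ℕ, 0 < p ∧ ∀ n : ℕ, m ≤ n → ω (n + p) = ω n

/-- The word `ω` has an abelian `k`-power with abelian period `ℓ > 0` starting at
position `i`. -/
def AbelianPowerAt {A : Type*} [DecidableEq A] (ω : ℕ → A) (i k ℓ : ℕ) : Prop :=
  0 < ℓ ∧ ∀ j₁ j₂ : ℕ, j₁ < k → j₂ < k → ∀ a : A,
    (factor ω (i + j₁ * ℓ) ℓ).count a = (factor ω (i + j₂ * ℓ) ℓ).count a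

open Finset Filter
open Int (fract)

section Factors

variable {A : Type*} (ω : ℕ → A)

theorem factor_add (i m n : ℕ) :
    factor ω i (m + n) = factor ω i m ++ factor ω (i + m) n := by
  simp [factor, List.range_add, add_assoc]

theorem length_factor (i n : ℕ) : (factor ω i n).length = n := by
  simp [factor]

variable [DecidableEq A] (a : A)

/-- `|U|_a` for the factor `U` of `ω` of length `n` at position `i`. -/
def factorCount (i n : ℕ) : ℕ := (factor ω i n).count a

theorem factorCount_zero (i : ℕ) : factorCount ω a i 0 = 0 := rfl

theorem factorCount_add (i m n : ℕ) :
    factorCount ω a i (m + n) = factorCount ω a i m + factorCount ω a (i + m) n := by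
  simp [factorCount, factor_add]

theorem factorCount_mul (i m ℓ : ℕ) :
    factorCount ω a i (m * ℓ) = ∑ j ∈ range m, factorCount ω a (i + j * ℓ) ℓ := by
  induction m with
  | zero => simp [factorCount, factor]
  | succ m ih => rw [Nat.succ_mul, factorCount_add, ih, sum_range_succ]

variable {ω}

theorem factorCount_le_add_one (hbal : IsCBalanced ω 1) (i j n : ℕ) :
    factorCount ω a i n ≤ factorCount ω a j n + 1 := by
  have := (abs_le.1 (hbal a n i j)).2
  unfold factorCount
  omega

theorem mul_factorCount_le (hbal : IsCBalanced ω 1) (i n m : ℕ) :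
    m * factorCount ω a i n ≤ factorCount ω a i (m * n) + m := by
  calc m * factorCount ω a i n
      ≤ ∑ j ∈ range m, (factorCount ω a (i + j * n) n + 1) := by
        simpa using card_nsmul_le_sum (range m) _ _
          fun j _ => factorCount_le_add_one a hbal i (i + j * n) n
    _ = factorCount ω a i (m * n) + m := by simp [sum_add_distrib, factorCount_mul]

theorem factorCount_mul_le (hbal : IsCBalanced ω 1) (i j n m : ℕ) :
    factorCount ω a i (m * n) ≤ m * (factorCount ω a j n + 1) := by
  rw [factorCount_mul]
  simpa using sum_le_card_nsmul (range m) _ _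
    fun t _ => factorCount_le_add_one a hbal (i + t * n) j n

theorem exists_abs_factorCount_sub_mul_le (hbal : IsCBalanced ω 1) :
    ∃ α : ℝ, ∀ i n, |(factorCount ω a i n : ℝ) - n * α| ≤ 1 := by
  set S : Set ℝ := {x | ∃ i n, 0 < n ∧ ((factorCount ω a i n : ℝ) - 1) / n = x}
  have hsep : ∀ i j n m, 0 < n → 0 < m →
      ((factorCount ω a i n : ℝ) - 1) / n ≤ (factorCount ω a j m + 1) / m := by
    intro i j n m hn hm
    have h₁ := mul_factorCount_le a hbal i n m
    have h₂ := factorCount_mul_le a hbal i j m n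
    rw [Nat.mul_comm n m] at h₂
    rw [div_le_div_iff₀ (by positivity) (by positivity)]
    have : m * factorCount ω a i n ≤ n * (factorCount ω a j m + 1) + m := by omega
    have : (m : ℝ) * factorCount ω a i n ≤ n * (factorCount ω a j m + 1) + m := by
      exact_mod_cast this
    linarith
  have hne : S.Nonempty := ⟨_, 0, 1, one_pos, rfl⟩
  have hbdd : BddAbove S := ⟨(factorCount ω a 0 1 + 1) / (1 : ℕ), by
    rintro _ ⟨i, n, hn, rfl⟩; exact hsep i 0 n 1 hn one_pos⟩
  refine ⟨sSup S, fun i n => ?_⟩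
  rcases Nat.eq_zero_or_pos n with rfl | hn
  · simp [factorCount_zero]
  have hlow := le_csSup hbdd ⟨i, n, hn, rfl⟩
  have hup := csSup_le hne (by rintro _ ⟨j, m, hm, rfl⟩; exact hsep j i m n hm hn)
  have hn' : (0 : ℝ) < n := by exact_mod_cast hn
  rw [div_le_iff₀ hn'] at hlow
  rw [le_div_iff₀ hn'] at hup
  rw [abs_le]
  constructor <;> linarith

end Factors

section Frequency

variable {A : Type*} [DecidableEq A] {ω : ℕ → A} {a : A} {α : ℝ}
  (hα : ∀ i n, |(factorCount ω a i n : ℝ) - n * α| ≤ 1)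
include hα

theorem abs_factorCount_sub_factorCount_sub_le (i m n : ℕ) :
    |((factorCount ω a i m : ℝ) - factorCount ω a i n) - ((m : ℝ) - n) * α| ≤ 1 := by
  wlog hnm : n ≤ m generalizing m n
  · rw [← abs_neg]
    convert this n m (by omega) using 2
    ring
  obtain ⟨d, rfl⟩ := Nat.exists_eq_add_of_le hnm
  convert hα (i + n) d using 2
  rw [factorCount_add]
  push_cast
  ring

theorem le_factorCount_of_mul_eq {ℓ : ℕ} {F : ℤ} {δ : ℝ} (h : ℓ * α = F + δ) (hδ : 0 < δ)
    (i : ℕ) : F ≤ factorCount ω a i ℓ := by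
  have := (abs_le.1 (hα i ℓ)).1
  have : (F : ℝ) - 1 < factorCount ω a i ℓ := by linarith
  have : F - 1 < (factorCount ω a i ℓ : ℤ) := by exact_mod_cast this
  omega

theorem factorCount_le_of_mul_eq {ℓ : ℕ} {F : ℤ} {η : ℝ} (h : ℓ * α = F - η) (hη : 0 < η)
    (i : ℕ) : factorCount ω a i ℓ ≤ F := by
  have := (abs_le.1 (hα i ℓ)).2
  have : (factorCount ω a i ℓ : ℝ) < F + 1 := by linarith
  have : (factorCount ω a i ℓ : ℤ) < F + 1 := by exact_mod_cast this
  omega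

theorem mul_le_factorCount_mul {ℓ : ℕ} {F : ℤ} {δ : ℝ} (h : ℓ * α = F + δ) (hδ : 0 < δ)
    (i m : ℕ) : m * F ≤ factorCount ω a i (m * ℓ) := by
  rw [factorCount_mul]
  push_cast
  simpa using card_nsmul_le_sum (range m) _ _
    fun j _ => le_factorCount_of_mul_eq hα h hδ (i + j * ℓ)

theorem factorCount_mul_le_mul {ℓ : ℕ} {F : ℤ} {η : ℝ} (h : ℓ * α = F - η) (hη : 0 < η)
    (i m : ℕ) : factorCount ω a i (m * ℓ) ≤ m * F := by
  rw [factorCount_mul]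
  push_cast
  simpa using sum_le_card_nsmul (range m) _ _
    fun j _ => factorCount_le_of_mul_eq hα h hη (i + j * ℓ)

theorem factorCount_blocks_eq_or_eq {k ℓ₁ ℓ₂ : ℕ} {F₁ F₂ : ℤ} {δ η : ℝ}
    (h₁ : ℓ₁ * α = F₁ + δ) (h₂ : ℓ₂ * α = F₂ - η) (hδ : 0 < δ) (hη : 0 < η)
    (hsmall : k * (δ + η) < 1) (i : ℕ) :
    (∀ j < k, (factorCount ω a (i + j * ℓ₁) ℓ₁ : ℤ) = F₁) ∨
      (∀ j < k, (factorCount ω a (i + j * ℓ₂) ℓ₂ : ℤ) = F₂) := by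
  by_contra! ⟨⟨j₁, hj₁, hne₁⟩, ⟨j₂, hj₂, hne₂⟩⟩
  have hc₁ : ((j₁ : ℤ) + 1) * F₁ + 1 ≤ factorCount ω a i ((j₁ + 1) * ℓ₁) := by
    have := mul_le_factorCount_mul hα h₁ hδ i j₁
    have := (le_factorCount_of_mul_eq hα h₁ hδ (i + j₁ * ℓ₁)).lt_of_ne' hne₁
    rw [Nat.succ_mul, factorCount_add]
    push_cast
    linarith
  have hc₂ : (factorCount ω a i ((j₂ + 1) * ℓ₂) : ℤ) + 1 ≤ ((j₂ : ℤ) + 1) * F₂ := by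
    have := factorCount_mul_le_mul hα h₂ hη i j₂
    have := (factorCount_le_of_mul_eq hα h₂ hη (i + j₂ * ℓ₂)).lt_of_ne hne₂
    rw [Nat.succ_mul, factorCount_add]
    push_cast
    linarith
  have hc₁' : ((j₁ : ℝ) + 1) * F₁ + 1 ≤ factorCount ω a i ((j₁ + 1) * ℓ₁) := by
    exact_mod_cast hc₁
  have hc₂' : (factorCount ω a i ((j₂ + 1) * ℓ₂) : ℝ) + 1 ≤ ((j₂ : ℝ) + 1) * F₂ := by
    exact_mod_cast hc₂
  -- the factor between the two prefixes is off by `2 - (j₁ + 1) δ - (j₂ + 1) η > 1`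
  have hpair := (abs_le.1 (abs_factorCount_sub_factorCount_sub_le hα i
    ((j₁ + 1) * ℓ₁) ((j₂ + 1) * ℓ₂))).2
  have hmul : (((j₁ + 1) * ℓ₁ : ℕ) - ((j₂ + 1) * ℓ₂ : ℕ) : ℝ) * α
      = ((j₁ : ℝ) + 1) * (F₁ + δ) - ((j₂ : ℝ) + 1) * (F₂ - η) := by
    push_cast
    rw [← h₁, ← h₂]
    ring
  have hδk : ((j₁ : ℝ) + 1) * δ ≤ k * δ :=
    mul_le_mul_of_nonneg_right (by exact_mod_cast hj₁) hδ.le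
  have hηk : ((j₂ : ℝ) + 1) * η ≤ k * η :=
    mul_le_mul_of_nonneg_right (by exact_mod_cast hj₂) hη.le
  rw [hmul] at hpair
  linarith

end Frequency

section BlockSums

variable {e : ℕ → ℤ} {ℓ : ℕ}

theorem eventually_eq_zero_of_nonneg_of_sum_le_one (hℓ : 0 < ℓ) (he : ∀ n, 0 ≤ e n)
    (hsum : ∀ i m, ∑ j ∈ range m, e (i + j * ℓ) ≤ 1) : ∀ᶠ n in atTop, e n = 0 := by
  have hsparse : ∀ n t, 0 < t → e n ≠ 0 → e (n + t * ℓ) ≠ 0 → False := by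
    intro n t ht h₀ hₜ
    have h₂ : e n + e (n + t * ℓ) ≤ ∑ j ∈ range (t + 1), e (n + j * ℓ) := by
      simpa using add_le_sum (f := fun j => e (n + j * ℓ)) (fun j _ => he _)
        (mem_range.2 t.succ_pos) (mem_range.2 t.lt_succ_self) ht.ne
    have := hsum n (t + 1)
    have := (he n).lt_of_ne' h₀
    have := (he _).lt_of_ne' hₜ
    omega
  have hinj : Set.InjOn (· % ℓ) {n | e n ≠ 0} := by
    intro m hm n hn hmn
    by_contra hne
    wlog hlt : m < n generalizing m n
    · exact this hn hm hmn.symm (Ne.symm hne) (by omega)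
    obtain ⟨t, ht⟩ := (Nat.modEq_iff_dvd' hlt.le).1 hmn
    refine hsparse m t (Nat.pos_of_ne_zero ?_) hm ?_
    · rintro rfl; omega
    · rwa [show m + t * ℓ = n by rw [Nat.mul_comm, ← ht]; omega]
  have hfin : {n | e n ≠ 0}.Finite :=
    Set.Finite.of_finite_image ((Set.finite_Iio ℓ).subset (by
      rintro _ ⟨n, -, rfl⟩; exact Nat.mod_lt n hℓ)) hinj
  obtain ⟨N, hN⟩ := hfin.bddAbove
  exact eventually_atTop.2 ⟨N + 1, fun n hn => by_contra fun h => by have := hN h; omega⟩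

theorem eventually_eq_zero_of_abs_sum_le_one (hℓ : 0 < ℓ) (hbal : ∀ m n, e m ≤ e n + 1)
    (hsum : ∀ i m, |∑ j ∈ range m, e (i + j * ℓ)| ≤ 1) : ∀ᶠ n in atTop, e n = 0 := by
  by_cases hpos : ∀ n, 0 ≤ e n
  · exact eventually_eq_zero_of_nonneg_of_sum_le_one hℓ hpos fun i m => (abs_le.1 (hsum i m)).2
  -- otherwise some term is negative, so by balance no term is positive
  obtain ⟨n₀, hn₀⟩ := not_forall.1 hpos
  have := eventually_eq_zero_of_nonneg_of_sum_le_one (e := fun n => -e n) hℓ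
    (fun n => by linarith [hbal n n₀]) fun i m => by
      simpa [sum_neg_distrib] using neg_le.2 (abs_le.1 (hsum i m)).1
  simpa using this

end BlockSums

theorem irrational_of_not_ultimatelyPeriodic {ω : ℕ → Fin 2} (hbal : IsCBalanced ω 1) {α : ℝ}
    (hα : ∀ i n, |(factorCount ω 1 i n : ℝ) - n * α| ≤ 1) (hap : ¬ UltimatelyPeriodic ω) :
    Irrational α := by
  rintro ⟨q, rfl⟩
  set ℓ := q.den
  have hblocks : ∀ᶠ n in atTop, (factorCount ω 1 n ℓ : ℤ) - q.num = 0 := by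
    refine eventually_eq_zero_of_abs_sum_le_one q.pos (fun m n => ?_) fun i m => ?_
    · have := factorCount_le_add_one 1 hbal m n ℓ
      omega
    · have h := hα i (m * ℓ)
      have hden : (ℓ : ℝ) * q = q.num := by exact_mod_cast q.den_mul_eq_num
      have hmul : ((m * ℓ : ℕ) : ℝ) * q = ((m * q.num : ℤ) : ℝ) := by
        push_cast
        rw [mul_assoc, hden]
      rw [hmul] at h
      rw [sum_sub_distrib, ← Nat.cast_sum, ← factorCount_mul]
      simpa using (show |(factorCount ω 1 i (m * ℓ) : ℤ) - m * q.num| ≤ 1 by exact_mod_cast h)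
  obtain ⟨N, hN⟩ := eventually_atTop.1 hblocks
  refine hap ⟨N, ℓ, q.pos, fun n hn => ?_⟩
  -- count the factor of length `ℓ + 1` at `n` from both ends
  have hshift : factorCount ω 1 n ℓ + factorCount ω 1 (n + ℓ) 1 =
      factorCount ω 1 n 1 + factorCount ω 1 (n + 1) ℓ := by
    rw [← factorCount_add, ← factorCount_add, Nat.add_comm]
  have := hN n hn
  have := hN (n + 1) (by omega)
  have hone : factorCount ω 1 (n + ℓ) 1 = factorCount ω 1 n 1 := by omega
  have hletter : ∀ x y : Fin 2, [x].count 1 = [y].count 1 → x = y := by decide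
  exact hletter _ _ hone

section Diophantine

theorem fract_lt_or_fract_neg_lt_of_abs_sub_lt {x ε : ℝ} {z : ℤ} (h : |x - z| < ε) :
    fract x < ε ∨ fract (-x) < ε := by
  rcases le_total (z : ℝ) x with hzx | hxz
  · left
    have : z ≤ ⌊x⌋ := Int.le_floor.2 hzx
    have : (z : ℝ) ≤ ⌊x⌋ := by exact_mod_cast this
    rw [← Int.self_sub_floor]
    linarith [le_abs_self (x - z)]
  · right
    have : -z ≤ ⌊-x⌋ := Int.le_floor.2 (by push_cast; linarith)
    have : (-z : ℝ) ≤ ⌊-x⌋ := by exact_mod_cast this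
    rw [← Int.self_sub_floor]
    linarith [neg_abs_le (x - z)]

theorem exists_fract_nat_mul_lt_or_fract_neg_lt (α : ℝ) {ε : ℝ} (hε : 0 < ε) :
    ∃ ℓ : ℕ, 0 < ℓ ∧ (fract (ℓ * α) < ε ∨ fract (ℓ * -α) < ε) := by
  obtain ⟨n, hn⟩ := exists_nat_one_div_lt hε
  obtain ⟨ℓ, hℓ, -, hℓα⟩ := Real.exists_nat_abs_mul_sub_round_le α n.succ_pos
  refine ⟨ℓ, hℓ, mul_neg (ℓ : ℝ) α ▸ fract_lt_or_fract_neg_lt_of_abs_sub_lt (hℓα.trans_lt ?_)⟩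
  calc 1 / ((n.succ : ℕ) + 1 : ℝ) ≤ 1 / (n + 1) := by gcongr; exact_mod_cast n.le_succ
    _ < ε := hn

theorem exists_nat_mul_mem_Ioo {d ε : ℝ} (hd : 0 < d) (hdε : d < ε) (hε : ε ≤ 1) :
    ∃ m : ℕ, 0 < m ∧ 1 - ε < m * d ∧ m * d < 1 := by
  refine ⟨⌊(1 - ε) / d⌋₊ + 1, Nat.succ_pos _, ?_, ?_⟩
  · have := Nat.lt_floor_add_one ((1 - ε) / d)
    rw [div_lt_iff₀ hd] at this
    exact_mod_cast this
  · have := Nat.floor_le (div_nonneg (sub_nonneg.2 hε) hd.le)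
    rw [le_div_iff₀ hd] at this
    push_cast
    linarith

/-- A multiple of a small positive fractional part lands just below `1`. -/
theorem exists_fract_nat_mul_neg_lt {β ε : ℝ} {ℓ : ℕ} (hℓ : 0 < ℓ) (hpos : 0 < fract (ℓ * β))
    (hlt : fract (ℓ * β) < ε) (hε : ε ≤ 1) : ∃ ℓ' : ℕ, 0 < ℓ' ∧ fract (ℓ' * -β) < ε := by
  obtain ⟨m, hm, hlo, hhi⟩ := exists_nat_mul_mem_Ioo hpos hlt hε
  have hfract : fract (((m * ℓ : ℕ) : ℝ) * β) = m * fract (ℓ * β) :=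
    Int.fract_eq_iff.2 ⟨by positivity, hhi, m * ⌊(ℓ : ℝ) * β⌋, by
      rw [← Int.self_sub_floor]; push_cast; ring⟩
  refine ⟨m * ℓ, Nat.mul_pos hm hℓ, ?_⟩
  rw [mul_neg, Int.fract_neg (by rw [hfract]; positivity), hfract]
  linarith

theorem Irrational.fract_pos {x : ℝ} (h : Irrational x) : 0 < fract x :=
  Int.fract_pos.2 (h.ne_int _)

theorem Irrational.exists_fract_lt_and_fract_neg_lt {α ε : ℝ} (h : Irrational α) (hε : 0 < ε) :
    ∃ ℓ₁ ℓ₂ : ℕ, 0 < ℓ₁ ∧ 0 < ℓ₂ ∧ fract (ℓ₁ * α) < ε ∧ fract (ℓ₂ * -α) < ε := by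
  suffices ∀ ε, 0 < ε → ε ≤ 1 →
      ∃ ℓ₁ ℓ₂ : ℕ, 0 < ℓ₁ ∧ 0 < ℓ₂ ∧ fract (ℓ₁ * α) < ε ∧ fract (ℓ₂ * -α) < ε by
    obtain ⟨ℓ₁, ℓ₂, h₁, h₂, h₁', h₂'⟩ := this (min ε 1) (lt_min hε one_pos) (min_le_right ε 1)
    exact ⟨ℓ₁, ℓ₂, h₁, h₂, h₁'.trans_le (min_le_left ε 1), h₂'.trans_le (min_le_left ε 1)⟩
  intro ε hε hε₁
  obtain ⟨ℓ, hℓ, hlt | hlt⟩ := exists_fract_nat_mul_lt_or_fract_neg_lt α hε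
  · obtain ⟨ℓ', hℓ', h'⟩ :=
      exists_fract_nat_mul_neg_lt hℓ (h.natCast_mul hℓ.ne').fract_pos hlt hε₁
    exact ⟨ℓ, ℓ', hℓ, hℓ', hlt, h'⟩
  · obtain ⟨ℓ', hℓ', h'⟩ :=
      exists_fract_nat_mul_neg_lt hℓ (h.neg.natCast_mul hℓ.ne').fract_pos hlt hε₁
    rw [neg_neg] at h'
    exact ⟨ℓ', ℓ, hℓ', hℓ, h', hlt⟩

end Diophantine

theorem List.count_zero_add_count_one (L : List (Fin 2)) : L.count 0 + L.count 1 = L.length := by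
  induction L with
  | nil => rfl
  | cons x L ih => fin_cases x <;> simp <;> omega

theorem abelianPowerAt_of_factorCount_eq {ω : ℕ → Fin 2} {i k ℓ : ℕ} {F : ℤ} (hℓ : 0 < ℓ)
    (h : ∀ j < k, (factorCount ω 1 (i + j * ℓ) ℓ : ℤ) = F) : AbelianPowerAt ω i k ℓ := by
  refine ⟨hℓ, fun j₁ j₂ hj₁ hj₂ a => ?_⟩
  have h₁ := (factor ω (i + j₁ * ℓ) ℓ).count_zero_add_count_one
  have h₂ := (factor ω (i + j₂ * ℓ) ℓ).count_zero_add_count_one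
  have h₁₂ : factorCount ω 1 (i + j₁ * ℓ) ℓ = factorCount ω 1 (i + j₂ * ℓ) ℓ := by
    have := (h j₁ hj₁).trans (h j₂ hj₂).symm
    omega
  rw [length_factor] at h₁ h₂
  unfold factorCount at h₁₂
  fin_cases a <;> simp <;> omega

theorem sturmian_abelian_powers_everywhere_general
    (ω : ℕ → Fin 2) (hap : ¬ UltimatelyPeriodic ω) (hbal : IsCBalanced ω 1)
    (k : ℕ) :
    ∃ ℓ₁ ℓ₂ : ℕ, 0 < ℓ₁ ∧ 0 < ℓ₂ ∧
      ∀ i : ℕ, AbelianPowerAt ω i k ℓ₁ ∨ AbelianPowerAt ω i k ℓ₂ := by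
  obtain ⟨α, hα⟩ := exists_abs_factorCount_sub_mul_le 1 hbal
  have hirr := irrational_of_not_ultimatelyPeriodic hbal hα hap
  obtain ⟨ℓ₁, ℓ₂, hℓ₁, hℓ₂, hδ, hη⟩ :=
    hirr.exists_fract_lt_and_fract_neg_lt (ε := 1 / (2 * (k + 1))) (by positivity)
  rw [lt_div_iff₀ (by positivity)] at hδ hη
  have hsmall : (k : ℝ) * (fract (ℓ₁ * α) + fract (ℓ₂ * -α)) < 1 := by
    linarith [Int.fract_nonneg ((ℓ₁ : ℝ) * α), Int.fract_nonneg ((ℓ₂ : ℝ) * -α)]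
  have h₂ : (ℓ₂ : ℝ) * α = ((-⌊(ℓ₂ : ℝ) * -α⌋ : ℤ) : ℝ) - fract (ℓ₂ * -α) := by
    rw [← Int.self_sub_floor]
    push_cast
    ring
  exact ⟨ℓ₁, ℓ₂, hℓ₁, hℓ₂, fun i => (factorCount_blocks_eq_or_eq hα (Int.floor_add_fract _).symm
    h₂ (hirr.natCast_mul hℓ₁.ne').fract_pos (hirr.neg.natCast_mul hℓ₂.ne').fract_pos hsmall i).imp
    (abelianPowerAt_of_factorCount_eq hℓ₁) (abelianPowerAt_of_factorCount_eq hℓ₂)⟩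

/-- For every Sturmian word `ω` (aperiodic balanced binary word) and every
`k ≥ 1`, there exist two positive integers `ℓ₁, ℓ₂` such that every position of
`ω` begins in an abelian `k`-power with abelian period `ℓ₁` or `ℓ₂`. -/
theorem sturmian_abelian_powers_everywhere
    (ω : ℕ → Fin 2) (hap : ¬ UltimatelyPeriodic ω) (hbal : IsCBalanced ω 1)
    (k : ℕ) (hk : 1 ≤ k) :
    ∃ ℓ₁ ℓ₂ : ℕ, 0 < ℓ₁ ∧ 0 < ℓ₂ ∧
      ∀ i : ℕ, AbelianPowerAt ω i k ℓ₁ ∨ AbelianPowerAt ω i k ℓ₂ :=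
  sturmian_abelian_powers_everywhere_general ω hap hbal k
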